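/- Let a, b₁, b₂, γ be positive reals, c ≠ 0 a real parameter, j a natural number, and ω > 0 a real number with h(ω²) = 0 and h′(ω²) ≠ 0. Then with τ = τ^{(j)}(ω), the number iω is a simple root of Δ_{c,τ}: one has Δ_{c,τ}(iω) = 0 and the λ-derivative 4λ³ + 3Aλ² + 2Bλ + C − c²(2λ + b₁ + b₂)e^{−2λτ} + 2τc²(λ+b₁)(λ+b₂)e^{−2λτ} is nonzero at λ = iω. -/

import Mathlib

noncomputable section

open Real

/-- A = b₁+b₂+2a -/
def Ac (a b1 b2 : ℝ) : ℝ := b1 + b2 + 2*a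
/-- B = 2a(b₁+b₂)+a²+b₁b₂+2γ -/
def Bc (a b1 b2 γ : ℝ) : ℝ := 2*a*(b1+b2) + a^2 + b1*b2 + 2*γ
/-- C = (a+b₁)(ab₂+γ)+(a+b₂)(ab₁+γ) -/
def Cc (a b1 b2 γ : ℝ) : ℝ := (a+b1)*(a*b2+γ) + (a+b2)*(a*b1+γ)
/-- D = (ab₁+γ)(ab₂+γ) -/
def Dc (a b1 b2 γ : ℝ) : ℝ := (a*b1+γ)*(a*b2+γ)
/-- P = A² − 2B -/
def Pc (a b1 b2 γ : ℝ) : ℝ := (Ac a b1 b2)^2 - 2*(Bc a b1 b2 γ)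
/-- Q = B² + 2D − 2AC − c⁴ -/
def Qc (a b1 b2 γ c : ℝ) : ℝ :=
  (Bc a b1 b2 γ)^2 + 2*(Dc a b1 b2 γ) - 2*(Ac a b1 b2)*(Cc a b1 b2 γ) - c^4
/-- R = C² − 2BD − c⁴(b₁²+b₂²) -/
def Rc (a b1 b2 γ c : ℝ) : ℝ :=
  (Cc a b1 b2 γ)^2 - 2*(Bc a b1 b2 γ)*(Dc a b1 b2 γ) - c^4*(b1^2+b2^2)
/-- S = D² − c⁴b₁²b₂² -/
def Sc (a b1 b2 γ c : ℝ) : ℝ := (Dc a b1 b2 γ)^2 - c^4*b1^2*b2^2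
/-- h(z) = z⁴ + Pz³ + Qz² + Rz + S -/
def hq (a b1 b2 γ c z : ℝ) : ℝ :=
  z^4 + Pc a b1 b2 γ*z^3 + Qc a b1 b2 γ c*z^2 + Rc a b1 b2 γ c*z + Sc a b1 b2 γ c
/-- h′(z) = 4z³ + 3Pz² + 2Qz + R -/
def hq' (a b1 b2 γ c z : ℝ) : ℝ :=
  4*z^3 + 3*(Pc a b1 b2 γ)*z^2 + 2*(Qc a b1 b2 γ c)*z + Rc a b1 b2 γ c
/-- The characteristic function Δ_{c,τ}(λ) of the linearization at the trivial equilibrium. -/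
def charFun (a b1 b2 γ c τ : ℝ) (lam : ℂ) : ℂ :=
  (lam^2 + (a+b1 : ℝ)*lam + (a*b1+γ : ℝ)) * (lam^2 + (a+b2 : ℝ)*lam + (a*b2+γ : ℝ))
    - (c^2 : ℝ) * (lam + (b1 : ℝ)) * (lam + (b2 : ℝ)) * Complex.exp ((-2) * lam * (τ : ℝ))
/-- N(ω) = c²[(b₁+b₂)²ω² + (ω²−b₁b₂)²] -/
def Nfun (b1 b2 c ω : ℝ) : ℝ := c^2*((b1+b2)^2*ω^2 + (ω^2 - b1*b2)^2)
/-- a*(ω) -/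
def aStar (a b1 b2 γ c ω : ℝ) : ℝ :=
  ((ω^4 - Bc a b1 b2 γ*ω^2 + Dc a b1 b2 γ)*(b1+b2)*ω
    + (Ac a b1 b2*ω^3 - Cc a b1 b2 γ*ω)*(b1*b2 - ω^2)) / Nfun b1 b2 c ω
/-- b*(ω) -/
def bStar (a b1 b2 γ c ω : ℝ) : ℝ :=
  ((ω^4 - Bc a b1 b2 γ*ω^2 + Dc a b1 b2 γ)*(b1*b2 - ω^2)
    + (-(Ac a b1 b2)*ω^3 + Cc a b1 b2 γ*ω)*(b1+b2)*ω) / Nfun b1 b2 c ω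
/-- the critical delays τ^{(j)}(ω) -/
def tauJ (a b1 b2 γ c : ℝ) (j : ℕ) (ω : ℝ) : ℝ :=
  if 0 ≤ aStar a b1 b2 γ c ω then
    (1/(2*ω)) * (Real.arccos (bStar a b1 b2 γ c ω) + 2*(j:ℝ)*Real.pi)
  else
    (1/(2*ω)) * (2*Real.pi - Real.arccos (bStar a b1 b2 γ c ω) + 2*(j:ℝ)*Real.pi)

/-- The λ-derivative of the characteristic function Δ_{c,τ}. -/
def dcharFun (a b1 b2 γ c τ : ℝ) (lam : ℂ) : ℂ :=
  4*lam^3 + 3*(Ac a b1 b2 : ℝ)*lam^2 + 2*(Bc a b1 b2 γ : ℝ)*lam + (Cc a b1 b2 γ : ℝ)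
    - (c^2 : ℝ) * (2*lam + (b1 + b2 : ℝ)) * Complex.exp ((-2) * lam * (τ : ℝ))
    + 2*(τ : ℝ)*(c^2 : ℝ)*(lam + (b1 : ℝ))*(lam + (b2 : ℝ)) * Complex.exp ((-2) * lam * (τ : ℝ))

/-!
Write `Δ_{c,τ}(λ) = F(λ) - G(λ) e^{-2λτ}` with `F` the product of the two quadratics and
`G(λ) = c²(λ+b₁)(λ+b₂)`. On the imaginary axis `|F(iω)|² - |G(iω)|² = h(ω²)`, so a root `ω²` of `h`
makes `F(iω)/G(iω) = b*(ω) - a*(ω) i` a point of the unit circle, and `τ^{(j)}(ω)` is exactly the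
delay with `e^{-2iωτ} = b* - a* i`; hence `Δ(iω) = 0`.

If also `Δ'(iω) = 0`, then `F' - G' E + 2τ G E = 0` with `F = G E`, `|E| = 1`, and multiplying by
`conj F = conj G conj E` gives `Re (i F' conj F) = Re (i G' conj G)`. The two sides are the halved
`ω`-derivatives of `|F(iω)|²` and `|G(iω)|²`, so their difference is `ω h'(ω²)`, which is nonzero.
-/

open Complex ComplexConjugate

def charPoly (a b1 b2 γ : ℝ) (lam : ℂ) : ℂ :=
  (lam^2 + (a+b1 : ℝ)*lam + (a*b1+γ : ℝ)) * (lam^2 + (a+b2 : ℝ)*lam + (a*b2+γ : ℝ))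

def charPolyDeriv (a b1 b2 γ : ℝ) (lam : ℂ) : ℂ :=
  4*lam^3 + 3*(Ac a b1 b2 : ℝ)*lam^2 + 2*(Bc a b1 b2 γ : ℝ)*lam + (Cc a b1 b2 γ : ℝ)

def delayCoeff (b1 b2 c : ℝ) (lam : ℂ) : ℂ := (c^2 : ℝ) * (lam + (b1 : ℝ)) * (lam + (b2 : ℝ))

def delayCoeffDeriv (b1 b2 c : ℝ) (lam : ℂ) : ℂ := (c^2 : ℝ) * (2*lam + (b1 + b2 : ℝ))

section Decomposition

variable (a b1 b2 γ c τ : ℝ) (lam : ℂ)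

theorem charFun_eq :
    charFun a b1 b2 γ c τ lam
      = charPoly a b1 b2 γ lam - delayCoeff b1 b2 c lam * exp (-2 * lam * τ) := by
  simp only [charFun, charPoly, delayCoeff]

theorem dcharFun_eq :
    dcharFun a b1 b2 γ c τ lam
      = charPolyDeriv a b1 b2 γ lam - delayCoeffDeriv b1 b2 c lam * exp (-2 * lam * τ)
        + 2 * τ * delayCoeff b1 b2 c lam * exp (-2 * lam * τ) := by
  simp only [dcharFun, charPolyDeriv, delayCoeffDeriv, delayCoeff]
  ring

end Decomposition

section OnImaginaryAxis

variable (a b1 b2 γ c ω : ℝ)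

theorem charPoly_I_mul :
    charPoly a b1 b2 γ (I * ω)
      = ofReal (ω^4 - Bc a b1 b2 γ * ω^2 + Dc a b1 b2 γ)
        + ofReal (Cc a b1 b2 γ * ω - Ac a b1 b2 * ω^3) * I := by
  apply Complex.ext <;>
    simp only [charPoly, Ac, Bc, Cc, Dc, pow_succ, pow_zero, one_mul, mul_re, mul_im, add_re,
      add_im, ofReal_re, ofReal_im, I_re, I_im] <;>
    ring

theorem charPolyDeriv_I_mul :
    charPolyDeriv a b1 b2 γ (I * ω)
      = ofReal (Cc a b1 b2 γ - 3 * Ac a b1 b2 * ω^2)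
        + ofReal (2 * Bc a b1 b2 γ * ω - 4 * ω^3) * I := by
  apply Complex.ext <;>
    simp only [charPolyDeriv, pow_succ, pow_zero, one_mul, mul_re, mul_im, add_re, add_im,
      ofReal_re, ofReal_im, I_re, I_im, re_ofNat, im_ofNat] <;>
    ring

theorem delayCoeff_I_mul :
    delayCoeff b1 b2 c (I * ω)
      = ofReal (c^2 * (b1 * b2 - ω^2)) + ofReal (c^2 * ((b1 + b2) * ω)) * I := by
  apply Complex.ext <;>
    simp only [delayCoeff, pow_succ, pow_zero, one_mul, mul_re, mul_im, add_re, add_im,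
      ofReal_re, ofReal_im, I_re, I_im] <;>
    ring

theorem delayCoeffDeriv_I_mul :
    delayCoeffDeriv b1 b2 c (I * ω) = ofReal (c^2 * (b1 + b2)) + ofReal (2 * c^2 * ω) * I := by
  apply Complex.ext <;>
    simp only [delayCoeffDeriv, pow_succ, pow_zero, one_mul, mul_re, mul_im, add_re, add_im,
      ofReal_re, ofReal_im, I_re, I_im, re_ofNat, im_ofNat] <;>
    ring

theorem normSq_charPoly_sub_normSq_delayCoeff :
    normSq (charPoly a b1 b2 γ (I * ω)) - normSq (delayCoeff b1 b2 c (I * ω))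
      = hq a b1 b2 γ c (ω^2) := by
  rw [charPoly_I_mul, delayCoeff_I_mul, normSq_add_mul_I, normSq_add_mul_I]
  simp only [hq, Pc, Qc, Rc, Sc]
  ring

theorem re_I_mul_charPolyDeriv_sub_re_I_mul_delayCoeffDeriv :
    (I * charPolyDeriv a b1 b2 γ (I * ω) * conj (charPoly a b1 b2 γ (I * ω))).re
      - (I * delayCoeffDeriv b1 b2 c (I * ω) * conj (delayCoeff b1 b2 c (I * ω))).re
      = ω * hq' a b1 b2 γ c (ω^2) := by
  rw [charPolyDeriv_I_mul, charPoly_I_mul, delayCoeffDeriv_I_mul, delayCoeff_I_mul]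
  simp only [mul_re, mul_im, add_re, add_im, ofReal_re, ofReal_im, I_re, I_im, conj_re, conj_im,
    hq', Pc, Qc, Rc]
  ring

theorem normSq_delayCoeff_I_mul :
    normSq (delayCoeff b1 b2 c (I * ω)) = c^2 * Nfun b1 b2 c ω := by
  rw [delayCoeff_I_mul, normSq_add_mul_I, Nfun]
  ring

variable {c ω}

theorem Nfun_pos (hc : c ≠ 0) (hω : ω ≠ 0) : 0 < Nfun b1 b2 c ω := by
  have hω2 : 0 < ω^2 := by positivity
  have : Nfun b1 b2 c ω = c^2 * ((ω^2 + b1^2) * (ω^2 + b2^2)) := by unfold Nfun; ring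
  rw [this]
  positivity

theorem delayCoeff_mul_eq_charPoly (hc : c ≠ 0) (hω : ω ≠ 0) :
    delayCoeff b1 b2 c (I * ω) * (bStar a b1 b2 γ c ω - aStar a b1 b2 γ c ω * I)
      = charPoly a b1 b2 γ (I * ω) := by
  have hN := (Nfun_pos b1 b2 hc hω).ne'
  rw [delayCoeff_I_mul, charPoly_I_mul]
  apply Complex.ext <;>
    simp only [mul_re, mul_im, add_re, add_im, sub_re, sub_im, ofReal_re, ofReal_im, I_re, I_im,
      aStar, bStar] <;>
    field_simp <;>
    simp only [Nfun] <;>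
    ring

end OnImaginaryAxis

def circleAngle (s t : ℝ) : ℝ := if 0 ≤ s then arccos t else 2 * π - arccos t

section CircleAngle

variable {s t : ℝ}

theorem cos_circleAngle (h : s^2 + t^2 = 1) : Real.cos (circleAngle s t) = t := by
  have ht : |t| ≤ 1 := abs_le_one_iff_mul_self_le_one.mpr (by nlinarith)
  have hcos := Real.cos_arccos (abs_le.mp ht).1 (abs_le.mp ht).2
  unfold circleAngle
  split_ifs
  · exact hcos
  · rw [Real.cos_two_pi_sub, hcos]

theorem sin_circleAngle (h : s^2 + t^2 = 1) : Real.sin (circleAngle s t) = s := by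
  have hsin : Real.sin (arccos t) = |s| := by
    rw [Real.sin_arccos, show 1 - t^2 = s^2 by linarith, Real.sqrt_sq_eq_abs]
  unfold circleAngle
  split_ifs with hs
  · rw [hsin, abs_of_nonneg hs]
  · rw [Real.sin_two_pi_sub, hsin, abs_of_neg (not_le.mp hs), neg_neg]

theorem exp_neg_circleAngle_add_mul_two_pi_mul_I (h : s^2 + t^2 = 1) (j : ℕ) :
    exp (-((circleAngle s t + j * (2 * π) : ℝ) * I)) = t - s * I := by
  rw [← neg_mul, ← ofReal_neg, exp_mul_I, ← ofReal_cos, ← ofReal_sin, Real.cos_neg, Real.sin_neg,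
    Real.cos_add_nat_mul_two_pi, Real.sin_add_nat_mul_two_pi, cos_circleAngle h, sin_circleAngle h]
  push_cast
  ring

end CircleAngle

theorem two_mul_mul_tauJ (a b1 b2 γ c : ℝ) (j : ℕ) {ω : ℝ} (hω : ω ≠ 0) :
    2 * ω * tauJ a b1 b2 γ c j ω
      = circleAngle (aStar a b1 b2 γ c ω) (bStar a b1 b2 γ c ω) + j * (2 * π) := by
  unfold tauJ circleAngle
  split_ifs <;> field_simp

theorem exp_neg_two_mul_I_mul_tauJ {a b1 b2 γ c : ℝ} (j : ℕ) {ω : ℝ} (hω : ω ≠ 0)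
    (h : aStar a b1 b2 γ c ω ^ 2 + bStar a b1 b2 γ c ω ^ 2 = 1) :
    exp (-2 * (I * ω) * (tauJ a b1 b2 γ c j ω : ℝ))
      = bStar a b1 b2 γ c ω - aStar a b1 b2 γ c ω * I := by
  rw [← exp_neg_circleAngle_add_mul_two_pi_mul_I h j, ← two_mul_mul_tauJ a b1 b2 γ c j hω]
  push_cast
  ring_nf

theorem re_I_mul_mul_conj_eq_of_deriv_eq_zero {f f' g g' E : ℂ} {τ : ℝ} (hE : ‖E‖ = 1)
    (hf : f = g * E) (hd : f' - g' * E + 2 * τ * g * E = 0) :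
    (I * f' * conj f).re = (I * g' * conj g).re := by
  have hEE : E * conj E = 1 := by
    rw [mul_conj, normSq_eq_norm_sq, hE]
    norm_num
  have : I * f' * conj f = I * g' * conj g - I * (2 * τ * normSq g : ℝ) := by
    rw [hf, map_mul, show f' = (g' - 2 * τ * g) * E by linear_combination hd]
    push_cast
    rw [← mul_conj]
    linear_combination I * (g' - 2 * τ * g) * conj g * hEE
  simp only [this, sub_re, mul_re, I_re, I_im, ofReal_re, ofReal_im]
  ring

theorem normSq_sub_mul_I (x y : ℝ) : normSq (x - y * I) = x^2 + y^2 := by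
  rw [sub_eq_add_neg, ← neg_mul, ← ofReal_neg, normSq_add_mul_I, neg_sq]

theorem stmt8_general (a b1 b2 γ c : ℝ)
    (hc : c ≠ 0)
    (j : ℕ) (ω : ℝ) (hω : 0 < ω)
    (hroot : hq a b1 b2 γ c (ω^2) = 0) (hroot' : hq' a b1 b2 γ c (ω^2) ≠ 0) :
    charFun a b1 b2 γ c (tauJ a b1 b2 γ c j ω) (Complex.I * (ω : ℂ)) = 0 ∧
    dcharFun a b1 b2 γ c (tauJ a b1 b2 γ c j ω) (Complex.I * (ω : ℂ)) ≠ 0 := by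
  have hFG := delayCoeff_mul_eq_charPoly a b1 b2 γ hc hω.ne'
  have hG : normSq (delayCoeff b1 b2 c (I * ω)) ≠ 0 := by
    rw [normSq_delayCoeff_I_mul]
    exact mul_ne_zero (pow_ne_zero 2 hc) (Nfun_pos b1 b2 hc hω.ne').ne'
  have hunit : aStar a b1 b2 γ c ω ^ 2 + bStar a b1 b2 γ c ω ^ 2 = 1 := by
    have key := normSq_charPoly_sub_normSq_delayCoeff a b1 b2 γ c ω
    rw [hroot, ← hFG, normSq_mul, normSq_sub_mul_I] at key
    apply mul_left_cancel₀ hG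
    linear_combination key
  have hE := exp_neg_two_mul_I_mul_tauJ j hω.ne' hunit
  have hΔ : charFun a b1 b2 γ c (tauJ a b1 b2 γ c j ω) (I * ω) = 0 := by
    rw [charFun_eq, hE, ← hFG, sub_self]
  refine ⟨hΔ, fun hd => hroot' ?_⟩
  have hre := re_I_mul_mul_conj_eq_of_deriv_eq_zero (by simp [norm_exp]) (by rw [hE, hFG])
    ((dcharFun_eq a b1 b2 γ c _ _).symm.trans hd)
  have hderiv := re_I_mul_charPolyDeriv_sub_re_I_mul_delayCoeffDeriv a b1 b2 γ c ω
  rw [hre, sub_self] at hderiv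
  exact (mul_eq_zero.mp hderiv.symm).resolve_left hω.ne'

/-- if h(ω²) = 0 and h′(ω²) ≠ 0, then iω is a simple root of Δ_{c,τ}
with τ = τ^{(j)}(ω). -/
theorem stmt8 (a b1 b2 γ c : ℝ)
    (ha : 0 < a) (hb1 : 0 < b1) (hb2 : 0 < b2) (hγ : 0 < γ) (hc : c ≠ 0)
    (j : ℕ) (ω : ℝ) (hω : 0 < ω)
    (hroot : hq a b1 b2 γ c (ω^2) = 0) (hroot' : hq' a b1 b2 γ c (ω^2) ≠ 0) :
    charFun a b1 b2 γ c (tauJ a b1 b2 γ c j ω) (Complex.I * (ω : ℂ)) = 0 ∧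
    dcharFun a b1 b2 γ c (tauJ a b1 b2 γ c j ω) (Complex.I * (ω : ℂ)) ≠ 0 :=
  stmt8_general a b1 b2 γ c hc j ω hω hroot hroot'
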